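/- arXiv:1511.04657 — 2 statements merged into one kernel-verified Lean document; each statement's English description precedes it below -/
import Mathlib

section
/- Let y¹, y² be independent standard Gaussians, f(u,y) = exp(−(u²−2yu)/2), and c(y¹,u¹,u²) = l(u¹−y¹)² + (u²−u¹)². Then for any measurable γ¹, γ² : ℝ → ℝ, with u¹ = γ¹(y¹) and v standard Gaussian independent of y¹, the Witsenhausen cost satisfies E[c(y¹, γ¹(y¹), γ²(γ¹(y¹)+v))] = ∫∫ c(y¹, γ¹(y¹), γ²(y²)) f(γ¹(y¹), y²) dP_g(y¹) dP_g(y²), where P_g is the standard Gaussian law. -/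
/-!
Conditionally on `y¹`, the observation `y² = u¹ + v` is Gaussian with mean `u¹ = γ¹ y¹` and
variance one, and the law `N(u, 1)` has density `exp (-(u² - 2 y u) / 2)` with respect to
`N(0, 1)` (a one-dimensional Cameron–Martin formula). Integrating the inner variable against
this density and then over `y¹` (Tonelli) gives the static form of the cost.
-/

open MeasureTheory ProbabilityTheory
open scoped ENNReal

lemma gaussianPDF_one_eq_mul (u y : ℝ) :
    gaussianPDF u 1 y =
      gaussianPDF 0 1 y * ENNReal.ofReal (Real.exp (-(u ^ 2 - 2 * y * u) / 2)) := by
  rw [gaussianPDF, gaussianPDF, ← ENNReal.ofReal_mul (gaussianPDFReal_nonneg _ _ _)]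
  simp only [gaussianPDFReal, mul_assoc, ← Real.exp_add]
  congr 3
  push_cast
  ring

lemma gaussianReal_one_eq_withDensity (u : ℝ) :
    gaussianReal u 1 = (gaussianReal 0 1).withDensity
      fun y ↦ ENNReal.ofReal (Real.exp (-(u ^ 2 - 2 * y * u) / 2)) := by
  rw [gaussianReal_of_var_ne_zero _ one_ne_zero, gaussianReal_of_var_ne_zero _ one_ne_zero,
    ← withDensity_mul _ (measurable_gaussianPDF _ _) (by fun_prop)]
  exact congrArg _ (funext (gaussianPDF_one_eq_mul u))

lemma lintegral_gaussianReal_const_add (u : ℝ) (g : ℝ → ℝ≥0∞) :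
    ∫⁻ v, g (u + v) ∂gaussianReal 0 1 =
      ∫⁻ y, g y * ENNReal.ofReal (Real.exp (-(u ^ 2 - 2 * y * u) / 2)) ∂gaussianReal 0 1 := by
  rw [← (measurableEmbedding_addLeft u).lintegral_map, gaussianReal_map_const_add, zero_add,
    gaussianReal_one_eq_withDensity,
    lintegral_withDensity_eq_lintegral_mul_non_measurable _ (by fun_prop)
      (ae_of_all _ fun _ ↦ ENNReal.ofReal_lt_top)]
  simp only [Pi.mul_apply, mul_comm]

/-- Static reduction of Witsenhausen's counterexample: with `y¹, v` independent standard
Gaussians, `u¹ = γ¹ y¹`, `y² = u¹ + v`, `u² = γ² y²`, the cost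
`E[c (y¹, u¹, u²)]` with `c (y¹,u¹,u²) = l (u¹-y¹)² + (u²-u¹)²` equals the double integral of
`c (y¹, γ¹ y¹, γ² y²) · f (γ¹ y¹) y²` with respect to the product of two standard Gaussian
laws, where `f u y = exp(-(u² - 2yu)/2)`. -/
theorem witsenhausen_static_reduction
    (l : ℝ) (γ₁ γ₂ : ℝ → ℝ) (hγ₁ : Measurable γ₁) (hγ₂ : Measurable γ₂) :
    ∫⁻ p : ℝ × ℝ,
        ENNReal.ofReal
          (l * (γ₁ p.1 - p.1) ^ 2 + (γ₂ (γ₁ p.1 + p.2) - γ₁ p.1) ^ 2)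
        ∂((gaussianReal 0 1).prod (gaussianReal 0 1)) =
      ∫⁻ p : ℝ × ℝ,
        ENNReal.ofReal
          ((l * (γ₁ p.1 - p.1) ^ 2 + (γ₂ p.2 - γ₁ p.1) ^ 2) *
            Real.exp (-((γ₁ p.1) ^ 2 - 2 * p.2 * γ₁ p.1) / 2))
        ∂((gaussianReal 0 1).prod (gaussianReal 0 1)) := by
  rw [lintegral_prod _ (by fun_prop), lintegral_prod _ (by fun_prop)]
  refine lintegral_congr fun y₁ ↦ ?_
  rw [lintegral_gaussianReal_const_add (γ₁ y₁)
    fun y₂ ↦ ENNReal.ofReal (l * (γ₁ y₁ - y₁) ^ 2 + (γ₂ y₂ - γ₁ y₁) ^ 2)]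
  simp only [ENNReal.ofReal_mul' (Real.exp_nonneg _)]
end

section
/- Fix M > 0 and define w₁(y) = sup_{(u¹,u²)∈[−M,M]²} [l(u¹−y)² + (u²−u¹)²]. Then w₁(y) = l(M+|y|)² + 4M², and for the family of probability measures P_{l,n} = P_g ∘ q_{l,n}⁻¹ (pushforwards of the standard Gaussian under uniform quantizers q_{l,n} of [−l,l] extended by mapping ℝ∖[−l,l] to 0), one has lim_{R→∞} sup_{l,n} ∫_{{w₁>R}} w₁ dP_{l,n} = 0. -/
/-! The envelope is attained at a corner of `[-M, M]²`: `u¹` at the end opposite to `y`, `u²` at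
the other end. For the tails, `|q y| ≤ |y| + 1` dominates `w₁ ∘ q` by the single function
`l (M + 1 + |x|)² + 4 M²`, which is Gaussian-integrable because the Gaussian has a finite second
moment. The tails of the pushforward integrals are then bounded by the tails of one integrable
function, which vanish by dominated convergence. -/

open MeasureTheory ProbabilityTheory Set Filter Topology
open scoped ENNReal

section CostEnvelope

variable {M l : ℝ}

lemma witsenhausen_cost_le (hl : 0 ≤ l) (y : ℝ) {u₁ u₂ : ℝ} (hu₁ : u₁ ∈ Icc (-M) M)
    (hu₂ : u₂ ∈ Icc (-M) M) :
    l * (u₁ - y) ^ 2 + (u₂ - u₁) ^ 2 ≤ l * (M + |y|) ^ 2 + 4 * M ^ 2 := by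
  have hfirst : (u₁ - y) ^ 2 ≤ (M + |y|) ^ 2 :=
    sq_le_sq' (by linarith [le_abs_self y, hu₁.1]) (by linarith [neg_abs_le y, hu₁.2])
  have hsecond : (u₂ - u₁) ^ 2 ≤ (2 * M) ^ 2 :=
    sq_le_sq' (by linarith [hu₁.2, hu₂.1]) (by linarith [hu₁.1, hu₂.2])
  nlinarith [mul_le_mul_of_nonneg_left hfirst hl]

lemma isGreatest_witsenhausen_cost (hM : 0 ≤ M) (hl : 0 ≤ l) (y : ℝ) :
    IsGreatest {c : ℝ | ∃ u₁ ∈ Icc (-M) M, ∃ u₂ ∈ Icc (-M) M,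
        c = l * (u₁ - y) ^ 2 + (u₂ - u₁) ^ 2}
      (l * (M + |y|) ^ 2 + 4 * M ^ 2) := by
  have hleft : -M ∈ Icc (-M) M := ⟨le_rfl, by linarith⟩
  have hright : M ∈ Icc (-M) M := ⟨by linarith, le_rfl⟩
  refine ⟨?_, fun c ⟨u₁, hu₁, u₂, hu₂, hc⟩ => hc ▸ witsenhausen_cost_le hl y hu₁ hu₂⟩
  rcases le_or_gt 0 y with hy | hy
  · exact ⟨-M, hleft, M, hright, by rw [abs_of_nonneg hy]; ring⟩
  · exact ⟨M, hright, -M, hleft, by rw [abs_of_neg hy]; ring⟩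

end CostEnvelope

section UniformIntegrability

variable {α β : Type*} [MeasurableSpace α] [MeasurableSpace β] {μ : Measure α}

lemma tendsto_setLIntegral_ofReal_lt_atTop {h : α → ℝ} (hm : Measurable h)
    (hi : Integrable h μ) :
    Tendsto (fun R : ℝ => ∫⁻ x in {x | R < h x}, ENNReal.ofReal (h x) ∂μ) atTop (𝓝 0) := by
  set tail : ℝ → α → ℝ≥0∞ := fun R => {x | R < h x}.indicator fun x => ENNReal.ofReal (h x)
  have hset (R : ℝ) : MeasurableSet {x | R < h x} := measurableSet_lt measurable_const hm
  have hpointwise (x : α) : Tendsto (fun R => tail R x) atTop (𝓝 0) := by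
    refine tendsto_const_nhds.congr' ?_
    filter_upwards [eventually_ge_atTop (h x)] with R hR
    exact (indicator_of_notMem (not_lt.mpr hR) _).symm
  have hlim := tendsto_lintegral_filter_of_dominated_convergence (μ := μ) (f := 0) _
    (Eventually.of_forall fun R => hm.ennreal_ofReal.indicator (hset R))
    (Eventually.of_forall fun R => ae_of_all _ fun x => indicator_le_self _ _ x)
    hi.lintegral_lt_top.ne (ae_of_all _ hpointwise)
  simpa only [tail, lintegral_indicator (hset _), Pi.zero_apply, lintegral_zero] using hlim

lemma setLIntegral_map_ofReal_lt_le {q : α → β} (hq : Measurable q) {w : β → ℝ}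
    (hw : Measurable w) {h : α → ℝ} (hwh : ∀ x, w (q x) ≤ h x) (R : ℝ) :
    ∫⁻ y in {y | R < w y}, ENNReal.ofReal (w y) ∂μ.map q ≤
      ∫⁻ x in {x | R < h x}, ENNReal.ofReal (h x) ∂μ := by
  rw [setLIntegral_map (measurableSet_lt measurable_const hw) hw.ennreal_ofReal hq]
  calc ∫⁻ x in q ⁻¹' {y | R < w y}, ENNReal.ofReal (w (q x)) ∂μ
      ≤ ∫⁻ x in q ⁻¹' {y | R < w y}, ENNReal.ofReal (h x) ∂μ :=
        lintegral_mono fun x => ENNReal.ofReal_le_ofReal (hwh x)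
    _ ≤ ∫⁻ x in {x | R < h x}, ENNReal.ofReal (h x) ∂μ :=
        lintegral_mono_set fun x (hx : R < w (q x)) => hx.trans_le (hwh x)

lemma integrable_mul_add_abs_sq_add {μ : Measure ℝ} [IsFiniteMeasure μ] (hμ : MemLp id 2 μ)
    (a b c : ℝ) : Integrable (fun x => a * (b + |x|) ^ 2 + c) μ := by
  have habs : Integrable (fun x => |x|) μ := (hμ.integrable one_le_two).abs
  have hsq : Integrable (fun x => x ^ 2) μ := hμ.integrable_sq
  have hexpand : (fun x : ℝ => a * (b + |x|) ^ 2 + c) =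
      fun x => a * b ^ 2 + c + (2 * a * b) * |x| + a * x ^ 2 := by
    ext x; rw [add_sq, sq_abs]; ring
  rw [hexpand]
  exact ((integrable_const _).add (habs.const_mul _)).add (hsq.const_mul _)

end UniformIntegrability

/-- The Witsenhausen cost envelope `w₁ y = sup_{(u¹,u²) ∈ [-M,M]²} (l (u¹-y)² + (u²-u¹)²)`
equals `l (M + |y|)² + 4 M²`, and `w₁` is uniformly integrable with respect to the pushforwards
of the standard Gaussian law under any family of quantizers `q i` satisfying
`|q i y| ≤ |y| + 1`. -/
theorem witsenhausen_envelope_formula_and_uniform_integrability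
    (M l : ℝ) (hM : 0 < M) (hl : 0 < l) :
    (∀ y : ℝ,
      sSup {c : ℝ | ∃ u₁ ∈ Icc (-M) M, ∃ u₂ ∈ Icc (-M) M,
          c = l * (u₁ - y) ^ 2 + (u₂ - u₁) ^ 2} =
        l * (M + |y|) ^ 2 + 4 * M ^ 2) ∧
    (∀ (ι : Type) (q : ι → ℝ → ℝ), (∀ i, Measurable (q i)) →
      (∀ i y, |q i y| ≤ |y| + 1) →
      ∀ ε > 0, ∃ R₀ : ℝ, ∀ R ≥ R₀, ∀ i,
        ∫⁻ y in {y : ℝ | R < l * (M + |y|) ^ 2 + 4 * M ^ 2},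
            ENNReal.ofReal (l * (M + |y|) ^ 2 + 4 * M ^ 2)
            ∂((gaussianReal 0 1).map (q i)) < ENNReal.ofReal ε) := by
  refine ⟨fun y => (isGreatest_witsenhausen_cost hM.le hl.le y).csSup_eq,
    fun ι q hq hqy ε hε => ?_⟩
  set majorant : ℝ → ℝ := fun x => l * ((M + 1) + |x|) ^ 2 + 4 * M ^ 2
  have hdom (i : ι) (x : ℝ) : l * (M + |q i x|) ^ 2 + 4 * M ^ 2 ≤ majorant x := by
    have := hqy i x
    simp only [majorant]
    gcongr l * ?_ ^ 2 + _
    linarith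
  have htail := tendsto_setLIntegral_ofReal_lt_atTop (μ := gaussianReal 0 1) (by fun_prop)
    (integrable_mul_add_abs_sq_add (memLp_id_gaussianReal 2) l (M + 1) (4 * M ^ 2))
  obtain ⟨R₀, hR₀⟩ := eventually_atTop.mp (htail.eventually_lt_const (ENNReal.ofReal_pos.mpr hε))
  exact ⟨R₀, fun R hR i =>
    (setLIntegral_map_ofReal_lt_le (hq i) (by fun_prop) (hdom i) R).trans_lt (hR₀ R hR)⟩
end
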